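/- Let T² ⊂ SO(5) be the set of block-diagonal matrices diag(R(θ₁), R(θ₂), 1) for θ₁, θ₂ ∈ ℝ. Then (i) the subspace of X ∈ Sym₀²(ℂ⁵) with AXAᵀ = X for all A ∈ T² equals { diag(c₁,c₁,c₂,c₂,c₃) : c₁,c₂,c₃ ∈ ℂ, 2c₁+2c₂+c₃ = 0 }, which is 2-dimensional; and (ii) letting M ∈ SO(5) be the matrix with rows (0,0,1,0,0), (0,0,0,−1,0), (1,0,0,0,0), (0,1,0,0,0), (0,0,0,0,−1), the subspace of X ∈ Sym₀²(ℂ⁵) with AXAᵀ = X for all A ∈ T² and MXMᵀ = X equals the one-dimensional span ℂ·diag(−1,−1,−1,−1,4). -/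

import Mathlib

/-!
Since `rotT θ₁ θ₂` is orthogonal, `X` is fixed by conjugation with it iff `X` commutes with it.
The half turns `rotT π 0 = diag(-1,-1,1,1,1)` and `rotT 0 π = diag(1,1,-1,-1,1)` force a commuting
`X` to be block diagonal for the blocks `{0,1}`, `{2,3}`, `{4}`, and the quarter turns together
with the symmetry of `X` make each `2 × 2` block scalar; conversely, such block-scalar matrices
commute with every `rotT θ₁ θ₂`. Conjugation by `M7` swaps the two `2 × 2` blocks, so it
identifies `c₁` with `c₂`, and the trace condition then gives `c₃ = -4 c₁`.
-/

open Matrix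

noncomputable section

/-- The torus element diag(R(θ₁), R(θ₂), 1) ∈ SO(5), as a complex matrix. -/
def rotT (θ₁ θ₂ : ℝ) : Matrix (Fin 5) (Fin 5) ℂ :=
  !![(Real.cos θ₁ : ℂ), (-Real.sin θ₁ : ℂ), 0, 0, 0;
     (Real.sin θ₁ : ℂ), (Real.cos θ₁ : ℂ), 0, 0, 0;
     0, 0, (Real.cos θ₂ : ℂ), (-Real.sin θ₂ : ℂ), 0;
     0, 0, (Real.sin θ₂ : ℂ), (Real.cos θ₂ : ℂ), 0;
     0, 0, 0, 0, 1]

/-- The element M ∈ SO(5) representing the ℤ₄ deck transformation. -/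
def M7 : Matrix (Fin 5) (Fin 5) ℂ :=
  !![0, 0, 1, 0, 0;
     0, 0, 0, -1, 0;
     1, 0, 0, 0, 0;
     0, 1, 0, 0, 0;
     0, 0, 0, 0, -1]

/-- The set { diag(c₁,c₁,c₂,c₂,c₃) : 2c₁+2c₂+c₃ = 0 }. -/
def diagSet : Set (Matrix (Fin 5) (Fin 5) ℂ) :=
  {Y | ∃ c₁ c₂ c₃ : ℂ, 2 * c₁ + 2 * c₂ + c₃ = 0 ∧ Y = Matrix.diagonal ![c₁, c₁, c₂, c₂, c₃]}

open Real

namespace Matrix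

variable {n R : Type*} [Fintype n] [DecidableEq n] [CommRing R]

theorem mul_mul_transpose_eq_iff {A X : Matrix n n R} (hA : A * Aᵀ = 1) :
    A * X * Aᵀ = X ↔ A * X = X * A := by
  have hA' : Aᵀ * A = 1 := mul_eq_one_comm.mp hA
  constructor
  · intro h
    calc A * X = A * X * (Aᵀ * A) := by rw [hA', Matrix.mul_one]
      _ = A * X * Aᵀ * A := by simp only [Matrix.mul_assoc]
      _ = X * A := by rw [h]
  · intro h
    rw [h, Matrix.mul_assoc, hA, Matrix.mul_one]

theorem apply_eq_zero_of_diagonal_mul_eq [NoZeroDivisors R] {d : n → R} {X : Matrix n n R}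
    (h : diagonal d * X = X * diagonal d) {i j : n} (hij : d i ≠ d j) : X i j = 0 := by
  have hcomm : d i * X i j = X i j * d j := by
    simpa only [diagonal_mul, mul_diagonal] using congr_fun₂ h i j
  have : (d i - d j) * X i j = 0 := by linear_combination hcomm
  exact (mul_eq_zero.mp this).resolve_left (sub_ne_zero.mpr hij)

end Matrix

lemma rotT_mul_transpose (θ₁ θ₂ : ℝ) : rotT θ₁ θ₂ * (rotT θ₁ θ₂)ᵀ = 1 := by
  have h₁ := Complex.sin_sq_add_cos_sq (θ₁ : ℂ)
  have h₂ := Complex.sin_sq_add_cos_sq (θ₂ : ℂ)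
  ext i j
  fin_cases i <;> fin_cases j <;>
    simp [rotT, mul_apply, Fin.sum_univ_five, one_apply] <;>
    first | linear_combination h₁ | linear_combination h₂ | ring

lemma rotT_pi_zero : rotT π 0 = diagonal ![-1, -1, 1, 1, 1] := by
  ext i j
  fin_cases i <;> fin_cases j <;> simp [rotT]

lemma rotT_zero_pi : rotT 0 π = diagonal ![1, 1, -1, -1, 1] := by
  ext i j
  fin_cases i <;> fin_cases j <;> simp [rotT]

lemma diagonal_mul_rotT (c₁ c₂ c₃ : ℂ) (θ₁ θ₂ : ℝ) :
    diagonal ![c₁, c₁, c₂, c₂, c₃] * rotT θ₁ θ₂ = rotT θ₁ θ₂ * diagonal ![c₁, c₁, c₂, c₂, c₃] := by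
  ext i j
  fin_cases i <;> fin_cases j <;> simp [rotT, mul_apply, Fin.sum_univ_five] <;> ring

lemma apply_eq_of_rotT_pi_div_two_zero_mul_eq {X : Matrix (Fin 5) (Fin 5) ℂ}
    (h : rotT (π / 2) 0 * X = X * rotT (π / 2) 0) : X 1 1 = X 0 0 ∧ X 0 1 = -X 1 0 := by
  have h₀₀ := congr_fun₂ h 0 0
  have h₀₁ := congr_fun₂ h 0 1
  simp [rotT, mul_apply, Fin.sum_univ_five] at h₀₀ h₀₁
  exact ⟨h₀₁, h₀₀.symm⟩

lemma apply_eq_of_rotT_zero_pi_div_two_mul_eq {X : Matrix (Fin 5) (Fin 5) ℂ}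
    (h : rotT 0 (π / 2) * X = X * rotT 0 (π / 2)) : X 3 3 = X 2 2 ∧ X 2 3 = -X 3 2 := by
  have h₂₂ := congr_fun₂ h 2 2
  have h₂₃ := congr_fun₂ h 2 3
  simp [rotT, mul_apply, Fin.sum_univ_five] at h₂₂ h₂₃
  exact ⟨h₂₃, h₂₂.symm⟩

lemma eq_diagonal_of_commute_rotT {X : Matrix (Fin 5) (Fin 5) ℂ} (hs : Xᵀ = X)
    (h : ∀ θ₁ θ₂ : ℝ, rotT θ₁ θ₂ * X = X * rotT θ₁ θ₂) :
    X = diagonal ![X 0 0, X 0 0, X 2 2, X 2 2, X 4 4] := by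
  have hsymm (i j : Fin 5) : X j i = X i j := congr_fun₂ hs i j
  have hπ₁ := h π 0
  have hπ₂ := h 0 π
  rw [rotT_pi_zero] at hπ₁
  rw [rotT_zero_pi] at hπ₂
  obtain ⟨h₁₁, h₀₁⟩ := apply_eq_of_rotT_pi_div_two_zero_mul_eq (h _ _)
  obtain ⟨h₃₃, h₂₃⟩ := apply_eq_of_rotT_zero_pi_div_two_mul_eq (h _ _)
  have h₁₀ : X 1 0 = 0 := by linear_combination (hsymm 0 1 + h₀₁) / 2
  have h₃₂ : X 3 2 = 0 := by linear_combination (hsymm 2 3 + h₂₃) / 2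
  ext i j
  fin_cases i <;> fin_cases j <;>
    simp [h₁₁, h₃₃, h₁₀, h₃₂, h₀₁, h₂₃] <;>
    first
      | (apply apply_eq_zero_of_diagonal_mul_eq hπ₁
         simp [neg_eq_iff_add_eq_zero, eq_neg_iff_add_eq_zero]; done)
      | (apply apply_eq_zero_of_diagonal_mul_eq hπ₂
         simp [neg_eq_iff_add_eq_zero, eq_neg_iff_add_eq_zero])

lemma mem_diagSet_iff {X : Matrix (Fin 5) (Fin 5) ℂ} :
    X ∈ diagSet ↔
      Xᵀ = X ∧ X.trace = 0 ∧ ∀ θ₁ θ₂ : ℝ, rotT θ₁ θ₂ * X * (rotT θ₁ θ₂)ᵀ = X := by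
  simp_rw [mul_mul_transpose_eq_iff (rotT_mul_transpose _ _)]
  constructor
  · rintro ⟨c₁, c₂, c₃, hc, rfl⟩
    refine ⟨diagonal_transpose _, ?_, fun θ₁ θ₂ => (diagonal_mul_rotT c₁ c₂ c₃ θ₁ θ₂).symm⟩
    simp only [trace_diagonal, Fin.sum_univ_five]
    simpa [two_mul, add_assoc] using hc
  · rintro ⟨hs, htr, h⟩
    have hX := eq_diagonal_of_commute_rotT hs h
    refine ⟨X 0 0, X 2 2, X 4 4, ?_, hX⟩
    rw [hX, trace_diagonal, Fin.sum_univ_five] at htr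
    simpa [two_mul, add_assoc] using htr

lemma span_diagSet :
    Submodule.span ℂ diagSet =
      Submodule.span ℂ (Set.range ![diagonal ![1, 1, 0, 0, -2], diagonal ![0, 0, 1, 1, -2]]) := by
  apply le_antisymm
  · rw [Submodule.span_le]
    rintro _ ⟨c₁, c₂, c₃, hc, rfl⟩
    have hD : diagonal ![c₁, c₁, c₂, c₂, c₃] =
        c₁ • diagonal ![1, 1, 0, 0, -2] + c₂ • diagonal ![0, 0, 1, 1, -2] := by
      rw [← diagonal_smul, ← diagonal_smul, diagonal_add]
      congr 1
      ext i
      fin_cases i <;> simp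
      linear_combination hc
    rw [hD]
    exact Submodule.add_mem _ (Submodule.smul_mem _ _ (Submodule.subset_span ⟨0, rfl⟩))
      (Submodule.smul_mem _ _ (Submodule.subset_span ⟨1, rfl⟩))
  · rw [Submodule.span_le]
    rintro _ ⟨i, rfl⟩
    fin_cases i
    · exact Submodule.subset_span ⟨1, 0, -2, by norm_num, rfl⟩
    · exact Submodule.subset_span ⟨0, 1, -2, by norm_num, rfl⟩

lemma finrank_span_diagSet : Module.finrank ℂ (Submodule.span ℂ diagSet) = 2 := by
  have hli :
      LinearIndependent ℂ ![diagonal ![(1 : ℂ), 1, 0, 0, -2], diagonal ![0, 0, 1, 1, -2]] := by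
    rw [LinearIndependent.pair_iff]
    intro s t hst
    have h₀ := congr_fun₂ hst 0 0
    have h₂ := congr_fun₂ hst 2 2
    simp at h₀ h₂
    exact ⟨h₀, h₂⟩
  rw [span_diagSet, finrank_span_eq_card hli, Fintype.card_fin]

lemma M7_mul_diagonal_mul_transpose (c₁ c₂ c₃ : ℂ) :
    M7 * diagonal ![c₁, c₁, c₂, c₂, c₃] * M7ᵀ = diagonal ![c₂, c₂, c₁, c₁, c₃] := by
  ext i j
  fin_cases i <;> fin_cases j <;>
    simp [M7, mul_apply, Fin.sum_univ_five, -cons_mul, -cons_vecMul, -vecMul_cons]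

lemma mem_diagSet_and_M7_fixed_iff {X : Matrix (Fin 5) (Fin 5) ℂ} :
    X ∈ diagSet ∧ M7 * X * M7ᵀ = X ↔ ∃ c : ℂ, c • diagonal ![-1, -1, -1, -1, 4] = X := by
  constructor
  · rintro ⟨⟨c₁, c₂, c₃, hc, rfl⟩, hM⟩
    rw [M7_mul_diagonal_mul_transpose] at hM
    have h₂₁ : c₂ = c₁ := by simpa using congr_fun₂ hM 0 0
    refine ⟨-c₁, ?_⟩
    rw [← diagonal_smul]
    congr 1
    ext i
    fin_cases i <;> simp [h₂₁]
    linear_combination -hc + 2 * h₂₁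
  · rintro ⟨c, rfl⟩
    rw [← diagonal_smul]
    have hc : c • ![(-1 : ℂ), -1, -1, -1, 4] = ![-c, -c, -c, -c, 4 * c] := by
      ext i; fin_cases i <;> simp [mul_comm]
    rw [hc, M7_mul_diagonal_mul_transpose]
    exact ⟨⟨-c, -c, 4 * c, by ring, rfl⟩, rfl⟩

theorem statement7 :
    ({X : Matrix (Fin 5) (Fin 5) ℂ | Xᵀ = X ∧ X.trace = 0 ∧
        ∀ θ₁ θ₂ : ℝ, rotT θ₁ θ₂ * X * (rotT θ₁ θ₂)ᵀ = X} = diagSet) ∧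
    Module.finrank ℂ ↥(Submodule.span ℂ diagSet) = 2 ∧
    ({X : Matrix (Fin 5) (Fin 5) ℂ | Xᵀ = X ∧ X.trace = 0 ∧
        (∀ θ₁ θ₂ : ℝ, rotT θ₁ θ₂ * X * (rotT θ₁ θ₂)ᵀ = X) ∧ M7 * X * M7ᵀ = X}
      = Set.range (fun c : ℂ => c • Matrix.diagonal ![-1, -1, -1, -1, 4])) := by
  refine ⟨Set.ext fun X => mem_diagSet_iff.symm, finrank_span_diagSet, Set.ext fun X => ?_⟩
  rw [Set.mem_ofPred_eq, Set.mem_range, ← mem_diagSet_and_M7_fixed_iff, mem_diagSet_iff]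
  simp only [and_assoc]

end
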